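/- An observable (POVM) E on a finite-dimensional system with Hamiltonian H_S is thermal—i.e. it admits a thermodynamically free measurement scheme—if and only if every effect E_x commutes with H_S. -/

import Mathlib

open Matrix Kronecker ComplexOrder

/-- Completely positive map, via Kraus representation (equivalent in finite dimension). -/
def IsCP {d : Type*} [Fintype d] [DecidableEq d]
    (Φ : Matrix d d ℂ → Matrix d d ℂ) : Prop :=
  ∃ (m : ℕ) (K : Fin m → Matrix d d ℂ), ∀ A, Φ A = ∑ i, K i * A * (K i)ᴴ

/-- Trace-preserving map. -/
def IsTP {d : Type*} [Fintype d] [DecidableEq d]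
    (Φ : Matrix d d ℂ → Matrix d d ℂ) : Prop :=
  ∀ A, (Φ A).trace = A.trace

/-- Unital map. -/
def IsUnital {d : Type*} [Fintype d] [DecidableEq d]
    (Φ : Matrix d d ℂ → Matrix d d ℂ) : Prop :=
  Φ 1 = 1

/-- `Φd` is the Heisenberg dual of `Φ`, defined by trace duality. -/
def IsDual {d : Type*} [Fintype d] [DecidableEq d]
    (Φ Φd : Matrix d d ℂ → Matrix d d ℂ) : Prop :=
  ∀ A B, (A * Φ B).trace = (Φd A * B).trace

/-- Gibbs state `e^{-βH}/tr[e^{-βH}]`. -/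
noncomputable def gibbs {d : Type*} [Fintype d] [DecidableEq d]
    (H : Matrix d d ℂ) (β : ℝ) : Matrix d d ℂ :=
  ((NormedSpace.exp ((-β : ℂ) • H)).trace)⁻¹ • NormedSpace.exp ((-β : ℂ) • H)

/-! Necessity: write the dual channel as `Ed A = ∑ Kᵢ A Kᵢᴴ` and let `H = H_S ⊗ 1 + 1 ⊗ H_A`.
Unitality and conservation of `H` give `∑ [Kᵢ, H] [Kᵢ, H]ᴴ = Ed (H²) - H²`, a positive matrix
whose trace vanishes by trace preservation, so every Kraus operator commutes with `H`, and then
so does the Heisenberg-picture pointer `Ed (1 ⊗ Z_x)`. As the Gibbs state `ξ` commutes with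
`H_A`, `[H_S, σ] ⊗ ξ = [H, σ ⊗ ξ]`, hence `tr (E_x [H_S, σ]) = tr (Ed (1 ⊗ Z_x) [H, σ ⊗ ξ]) = 0`
for every `σ`.

Sufficiency: with a copy of the system as probe, the swap unitary conserves
`H_S ⊗ 1 + 1 ⊗ H_S` and moves the system state onto the probe, where `Z = E` reads it out. -/

lemma Matrix.sub_kronecker {R l m n p : Type*} [Ring R] (A B : Matrix l m R) (C : Matrix n p R) :
    (A - B) ⊗ₖ C = A ⊗ₖ C - B ⊗ₖ C := by
  rw [eq_sub_iff_add_eq, ← add_kronecker, sub_add_cancel]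

section KroneckerSum

variable {R m n : Type*} [Fintype m] [Fintype n] [DecidableEq m] [DecidableEq n] [CommRing R]

abbrev kroneckerSum (A : Matrix m m R) (B : Matrix n n R) : Matrix (m × n) (m × n) R :=
  A ⊗ₖ 1 + 1 ⊗ₖ B

lemma Commute.kronecker_kroneckerSum {A H : Matrix m m R} {B K : Matrix n n R}
    (hA : Commute A H) (hB : Commute B K) : Commute (A ⊗ₖ B) (kroneckerSum H K) := by
  refine Commute.add_right ?_ ?_ <;>
    simp only [Commute, SemiconjBy, ← mul_kronecker_mul, one_mul, mul_one, hA.eq, hB.eq]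

lemma kroneckerSum_commutator_kronecker {H σ : Matrix m m R} {K ξ : Matrix n n R}
    (hξ : Commute ξ K) :
    kroneckerSum H K * (σ ⊗ₖ ξ) - (σ ⊗ₖ ξ) * kroneckerSum H K = (H * σ - σ * H) ⊗ₖ ξ := by
  simp only [add_mul, mul_add, ← mul_kronecker_mul, one_mul, mul_one, hξ.eq, sub_kronecker]
  abel

end KroneckerSum

lemma Matrix.IsHermitian.kroneckerSum {R m n : Type*} [CommRing R] [StarRing R] [Fintype m]
    [Fintype n] [DecidableEq m] [DecidableEq n] {A : Matrix m m R} {B : Matrix n n R}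
    (hA : A.IsHermitian)
    (hB : B.IsHermitian) : (kroneckerSum A B).IsHermitian := by
  simp only [IsHermitian, conjTranspose_add, conjTranspose_kronecker,
    conjTranspose_one, hA.eq, hB.eq]

section Channels

variable {d : Type*} [Fintype d] [DecidableEq d]

lemma commute_kraus_of_fixed {m : ℕ} {K : Fin m → Matrix d d ℂ} {H : Matrix d d ℂ}
    (hH : H.IsHermitian) (hunital : ∑ i, K i * 1 * (K i)ᴴ = 1)
    (htrace : (∑ i, K i * (H * H) * (K i)ᴴ).trace = (H * H).trace)
    (hfix : ∑ i, K i * H * (K i)ᴴ = H) (i : Fin m) : Commute (K i) H := by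
  set L : Fin m → Matrix d d ℂ := fun i => K i * H - H * K i
  have hdefect : ∑ i, L i * (L i)ᴴ = ∑ i, K i * (H * H) * (K i)ᴴ - H * H := by
    have hterm : ∀ i, L i * (L i)ᴴ = K i * (H * H) * (K i)ᴴ - K i * H * (K i)ᴴ * H
        - H * (K i * H * (K i)ᴴ) + H * (K i * 1 * (K i)ᴴ) * H := fun i => by
      simp only [L, conjTranspose_sub, conjTranspose_mul, hH.eq]
      noncomm_ring
    rw [Finset.sum_congr rfl fun i _ => hterm i, Finset.sum_add_distrib, Finset.sum_sub_distrib,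
      Finset.sum_sub_distrib, ← Finset.sum_mul, ← Finset.mul_sum, ← Finset.sum_mul,
      ← Finset.mul_sum, hfix, hunital]
    noncomm_ring
  have hzero : ∑ i, (L i * (L i)ᴴ).trace = 0 := by
    rw [← trace_sum, hdefect, trace_sub, htrace, sub_self]
  have hLi := (Finset.sum_eq_zero_iff_of_nonneg fun j _ =>
    (posSemidef_self_mul_conjTranspose (L j)).trace_nonneg).1 hzero i (Finset.mem_univ i)
  exact sub_eq_zero.1 (trace_mul_conjTranspose_self_eq_zero_iff.1 hLi)

lemma IsCP.commute_map_of_map_eq_self {Φ : Matrix d d ℂ → Matrix d d ℂ} {H A : Matrix d d ℂ}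
    (hCP : IsCP Φ) (hTP : IsTP Φ) (hunital : IsUnital Φ) (hH : H.IsHermitian) (hfix : Φ H = H)
    (hA : Commute A H) : Commute (Φ A) H := by
  obtain ⟨m, K, hK⟩ := hCP
  have hKH : ∀ i, Commute (K i) H := commute_kraus_of_fixed hH
    ((hK 1).symm.trans hunital) ((congrArg trace (hK _)).symm.trans (hTP _))
    ((hK H).symm.trans hfix)
  have hKH' : ∀ i, Commute (K i)ᴴ H := fun i => by
    simpa only [star_eq_conjTranspose, hH.eq] using (hKH i).star_star
  rw [hK]
  exact Commute.sum_left _ _ _ fun i _ => ((hKH i).mul_left hA).mul_left (hKH' i)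

lemma isCP_conj (U : Matrix d d ℂ) : IsCP fun A => U * A * Uᴴ :=
  ⟨1, fun _ => U, fun A => by rw [Fin.sum_univ_one]⟩

lemma isTP_conj {U : Matrix d d ℂ} (hU : U ∈ unitaryGroup d ℂ) :
    IsTP fun A => U * A * Uᴴ := fun A => by
  rw [trace_mul_comm, ← mul_assoc, ← star_eq_conjTranspose, Unitary.star_mul_self_of_mem hU,
    one_mul]

lemma isUnital_conj {U : Matrix d d ℂ} (hU : U ∈ unitaryGroup d ℂ) :
    IsUnital fun A => U * A * Uᴴ := by
  show U * 1 * Uᴴ = 1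
  rw [mul_one, ← star_eq_conjTranspose, Unitary.mul_star_self_of_mem hU]

lemma isDual_conj (U : Matrix d d ℂ) :
    IsDual (fun A => U * A * Uᴴ) (fun A => Uᴴ * A * Uᴴᴴ) := fun A B => by
  rw [conjTranspose_conjTranspose, ← mul_assoc, ← mul_assoc, trace_mul_comm, ← mul_assoc,
    ← mul_assoc]

end Channels

lemma trace_mul_commutator_eq_zero {R d : Type*} [CommRing R] [Fintype d] {F H : Matrix d d R}
    (hF : Commute F H) (X : Matrix d d R) : (F * (H * X - X * H)).trace = 0 := by
  rw [mul_sub, trace_sub, ← mul_assoc, hF.eq, mul_assoc, trace_mul_comm H, mul_assoc, sub_self]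

theorem commute_of_conserving_measurement_scheme {s a : Type*} [Fintype s] [DecidableEq s]
    [Fintype a] [DecidableEq a] {HS F : Matrix s s ℂ} {HA ξ Z : Matrix a a ℂ}
    {E Ed : Matrix (s × a) (s × a) ℂ → Matrix (s × a) (s × a) ℂ}
    (hHS : HS.IsHermitian) (hHA : HA.IsHermitian) (hCP : IsCP Ed) (hTP : IsTP Ed)
    (hunital : IsUnital Ed) (hdual : IsDual E Ed)
    (hconserve : Ed (kroneckerSum HS HA) = kroneckerSum HS HA)
    (hξ : Commute ξ HA) (hZ : Commute Z HA)
    (hstats : ∀ ρ, (F * ρ).trace = ((1 ⊗ₖ Z) * E (ρ ⊗ₖ ξ)).trace) : Commute F HS := by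
  have hpointer : Commute (Ed (1 ⊗ₖ Z)) (kroneckerSum HS HA) :=
    hCP.commute_map_of_map_eq_self hTP hunital (hHS.kroneckerSum hHA) hconserve
      ((Commute.one_left HS).kronecker_kroneckerSum hZ)
  refine sub_eq_zero.1 (ext_iff_trace_mul_right.2 fun σ => ?_)
  rw [zero_mul, trace_zero]
  calc ((F * HS - HS * F) * σ).trace = (F * (HS * σ - σ * HS)).trace := by
        rw [sub_mul, mul_sub, trace_sub, trace_sub, mul_assoc, mul_assoc, trace_mul_comm HS,
          mul_assoc]
    _ = (Ed (1 ⊗ₖ Z) *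
          (kroneckerSum HS HA * (σ ⊗ₖ ξ) - (σ ⊗ₖ ξ) * kroneckerSum HS HA)).trace := by
        rw [hstats, kroneckerSum_commutator_kronecker hξ, hdual]
    _ = 0 := trace_mul_commutator_eq_zero hpointer _

section Gibbs

variable {d : Type*} [Fintype d] [DecidableEq d]

lemma trace_exp_ne_zero [Nonempty d] {M : Matrix d d ℂ} (hM : M.IsHermitian) :
    (NormedSpace.exp M).trace ≠ 0 := by
  set B := NormedSpace.exp ((1 / 2 : ℝ) • M)
  have hB : Bᴴ = B := (hM.smul (IsSelfAdjoint.all _)).exp.eq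
  have hexp : NormedSpace.exp M = B * Bᴴ := by
    rw [hB, ← exp_add_of_commute _ _ (Commute.refl _), ← add_smul]
    norm_num
  intro h
  rw [hexp, trace_mul_conjTranspose_self_eq_zero_iff] at h
  exact (isUnit_exp M).ne_zero (by rw [hexp, h, zero_mul])

lemma trace_gibbs [Nonempty d] {H : Matrix d d ℂ} (hH : H.IsHermitian) (β : ℝ) :
    (gibbs H β).trace = 1 := by
  have hβH : ((-β : ℂ) • H).IsHermitian := hH.smul (by simp [IsSelfAdjoint])
  rw [gibbs, trace_smul, smul_eq_mul, inv_mul_cancel₀ (trace_exp_ne_zero hβH)]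

lemma commute_gibbs (H : Matrix d d ℂ) (β : ℝ) : Commute (gibbs H β) H :=
  (((Commute.refl H).smul_left _).exp_left).smul_left _

end Gibbs

section Swap

variable {R n : Type*} [CommRing R] [DecidableEq n]

variable (R n) in
def swapMatrix : Matrix (n × n) (n × n) R :=
  Equiv.Perm.permMatrix R (Equiv.prodComm n n)

lemma conjTranspose_swapMatrix [StarRing R] : (swapMatrix R n)ᴴ = swapMatrix R n := by
  rw [swapMatrix, conjTranspose_permMatrix]
  rfl

lemma swapMatrix_mul_kronecker_mul [Fintype n] (A B : Matrix n n R) :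
    swapMatrix R n * (A ⊗ₖ B) * swapMatrix R n = B ⊗ₖ A := by
  ext ⟨i, j⟩ ⟨k, l⟩
  simp [swapMatrix, PEquiv.toMatrix_toPEquiv_mul, PEquiv.mul_toMatrix_toPEquiv, mul_comm]

lemma swapMatrix_mem_unitaryGroup [Fintype n] [StarRing R] :
    swapMatrix R n ∈ unitaryGroup (n × n) R := by
  rw [mem_unitaryGroup_iff, star_eq_conjTranspose, conjTranspose_swapMatrix]
  simpa only [one_kronecker_one, mul_one] using swapMatrix_mul_kronecker_mul (1 : Matrix n n R) 1

end Swap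

/-- A POVM `E` on a finite-dimensional system with Hamiltonian `H_S` is
thermal, i.e. admits a thermodynamically free measurement scheme (a probe with Hamiltonian
`H_A` prepared in a Gibbs state, a bistochastic channel conserving the additive total
Hamiltonian, and a pointer POVM commuting with `H_A` reproducing the statistics of `E`),
if and only if every effect `E_x` commutes with `H_S`. -/
theorem observable_thermal_iff_commutes {ns N : ℕ} (hns : 0 < ns)
    (HS : Matrix (Fin ns) (Fin ns) ℂ) (hHS : HS.IsHermitian)
    (Eff : Fin N → Matrix (Fin ns) (Fin ns) ℂ)
    (hpos : ∀ x, (Eff x).PosSemidef)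
    (hsum : ∑ x, Eff x = 1) :
    (∃ (na : ℕ) (HA : Matrix (Fin na) (Fin na) ℂ) (_ : HA.IsHermitian) (β : ℝ) (_ : 0 < β)
      (E Ed : Matrix (Fin ns × Fin na) (Fin ns × Fin na) ℂ →
              Matrix (Fin ns × Fin na) (Fin ns × Fin na) ℂ)
      (Z : Fin N → Matrix (Fin na) (Fin na) ℂ),
        IsCP E ∧ IsTP E ∧ IsUnital E ∧ IsCP Ed ∧ IsTP Ed ∧ IsUnital Ed ∧ IsDual E Ed ∧
        Ed (HS ⊗ₖ 1 + 1 ⊗ₖ HA) = HS ⊗ₖ 1 + 1 ⊗ₖ HA ∧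
        (∀ x, (Z x).PosSemidef) ∧ (∑ x, Z x = 1) ∧ (∀ x, Z x * HA = HA * Z x) ∧
        (∀ (ρ : Matrix (Fin ns) (Fin ns) ℂ) (x : Fin N),
          (Eff x * ρ).trace = ((1 ⊗ₖ Z x) * E (ρ ⊗ₖ gibbs HA β)).trace))
    ↔ (∀ x, Eff x * HS = HS * Eff x) := by
  constructor
  · rintro ⟨na, HA, hHA, β, -, E, Ed, Z, -, -, -, hCP, hTP, hunital, hdual, hconserve, -, -, hZ,
      hstats⟩ x
    exact commute_of_conserving_measurement_scheme hHS hHA hCP hTP hunital hdual hconserve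
      (commute_gibbs HA β) (hZ x) (hstats · x)
  · intro hcomm
    have hS := swapMatrix_mem_unitaryGroup (R := ℂ) (n := Fin ns)
    have : Nonempty (Fin ns) := ⟨⟨0, hns⟩⟩
    refine ⟨ns, HS, hHS, 1, one_pos, fun A => swapMatrix ℂ _ * A * (swapMatrix ℂ _)ᴴ,
      fun A => (swapMatrix ℂ _)ᴴ * A * (swapMatrix ℂ _)ᴴᴴ, Eff, isCP_conj _, isTP_conj hS,
      isUnital_conj hS, isCP_conj _, isTP_conj (Unitary.star_mem hS),
      isUnital_conj (Unitary.star_mem hS), isDual_conj _, ?_, hpos, hsum, hcomm, fun ρ x => ?_⟩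
    · simp only [conjTranspose_swapMatrix, mul_add, add_mul,
        swapMatrix_mul_kronecker_mul, add_comm]
    · beta_reduce
      rw [conjTranspose_swapMatrix, swapMatrix_mul_kronecker_mul, ← mul_kronecker_mul,
        trace_kronecker, one_mul, trace_gibbs hHS, one_mul]
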